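/- arXiv:1509.07321 — 3 statements merged into one kernel-verified Lean document; each statement's English description precedes it below -/
import Mathlib

section
/- Let ξ be a positive random variable with finite mean μ = E[ξ] > 0, let ξ₀ be a random variable with the size-biased distribution P{ξ₀ ≤ x} = (1/μ)∫_{[0,x]} y P{ξ ∈ dy}, and let U be uniform on [0,1] independent of ξ₀. Then for all y, z ≥ 0, P{(1−U)ξ₀ ≤ y, Uξ₀ < z} = (1/μ)·E[(z ∧ ξ − (ξ − y)₊)₊]. -/
open MeasureTheory ProbabilityTheory Set
open scoped ENNReal

/-!
The hypothesis on the distribution function of `ξ₀` identifies its law with the law of `ξ`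
weighted by the density `x / μ` (both vanish on `(-∞, 0]`, so agreement for `x ≥ 0` suffices). By independence and Fubini the
probability of the event is the integral, against this law, of the Lebesgue measure of the section
`{u ∈ [0, 1] | (1 - u) x ≤ y ∧ u x < z}`, an interval of length `((z ∧ x - (x - y)₊) / x)₊`;
the factor `x` of the size bias cancels the `1 / x` of this length.
-/

lemma Real.volume_eq_ofReal_sub_of_Ioo_subset_of_subset_Icc {s : Set ℝ} {a b : ℝ}
    (hIoo : Ioo a b ⊆ s) (hIcc : s ⊆ Icc a b) : volume s = ENNReal.ofReal (b - a) :=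
  le_antisymm (Real.volume_Icc ▸ measure_mono hIcc) (Real.volume_Ioo ▸ measure_mono hIoo)

lemma volume_restrict_Icc_setOf_one_sub_mul_le_and_mul_lt {x : ℝ} (hx : 0 < x) (y z : ℝ) :
    volume.restrict (Icc (0 : ℝ) 1) {u | (1 - u) * x ≤ y ∧ u * x < z}
      = ENNReal.ofReal (min 1 (z / x) - max 0 (1 - y / x)) := by
  rw [Measure.restrict_apply' measurableSet_Icc]
  apply Real.volume_eq_ofReal_sub_of_Ioo_subset_of_subset_Icc
  · rintro u ⟨hau, hub⟩
    rw [max_lt_iff] at hau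
    rw [lt_min_iff] at hub
    refine ⟨⟨?_, ?_⟩, hau.1.le, hub.1.le⟩
    · exact ((lt_div_iff₀ hx).mp (sub_lt_comm.mp hau.2)).le
    · exact (lt_div_iff₀ hx).mp hub.2
  · rintro u ⟨⟨hy, hz⟩, hu0, hu1⟩
    refine ⟨max_le hu0 (sub_le_comm.mp ((le_div_iff₀ hx).mpr hy)),
      le_min hu1 ((lt_div_iff₀ hx).mpr hz).le⟩

lemma div_mul_max_min_one_div_sub_max_zero_one_sub_div {x : ℝ} (hx : 0 < x) (c y z : ℝ) :
    x / c * max (min 1 (z / x) - max 0 (1 - y / x)) 0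
      = c⁻¹ * max (min z x - max (x - y) 0) 0 := by
  rw [div_eq_inv_mul, mul_assoc, mul_max_of_nonneg _ _ hx.le, mul_sub,
    mul_min_of_nonneg _ _ hx.le, mul_max_of_nonneg _ _ hx.le, mul_sub, mul_div_cancel₀ _ hx.ne',
    mul_div_cancel₀ _ hx.ne', mul_one, mul_zero, min_comm z, max_comm 0]

lemma ENNReal.ofReal_div_mul_ofReal_min_one_div_sub_max_zero_one_sub_div {x c : ℝ} (hx : 0 < x)
    (hc : 0 ≤ c) (y z : ℝ) :
    ENNReal.ofReal (x / c) * ENNReal.ofReal (min 1 (z / x) - max 0 (1 - y / x))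
      = ENNReal.ofReal (c⁻¹ * max (min z x - max (x - y) 0) 0) := by
  rw [← div_mul_max_min_one_div_sub_max_zero_one_sub_div hx, ENNReal.ofReal_mul (by positivity),
    ENNReal.ofReal_max, ENNReal.ofReal_zero, max_zero]

theorem ProbabilityTheory.IndepFun.measure_preimage_eq_lintegral {Ω α β : Type*}
    [MeasurableSpace Ω] [MeasurableSpace α] [MeasurableSpace β] {P : Measure Ω} [IsFiniteMeasure P]
    {X : Ω → α} {Y : Ω → β}
    (hXY : IndepFun X Y P) (hX : Measurable X) (hY : Measurable Y)
    {S : Set (α × β)} (hS : MeasurableSet S) :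
    P ((fun ω ↦ (X ω, Y ω)) ⁻¹' S) = ∫⁻ x, P.map Y (Prod.mk x ⁻¹' S) ∂P.map X := by
  rw [← Measure.map_apply (hX.prodMk hY) hS,
    (indepFun_iff_map_prod_eq_prod_map_map hX.aemeasurable hY.aemeasurable).mp hXY,
    Measure.prod_apply hS]

lemma withDensity_ofReal_div_map_Iic {Ω : Type*} [MeasurableSpace Ω] {P : Measure Ω}
    {ξ : Ω → ℝ} {μ : ℝ} (hξ : 0 ≤ᵐ[P] ξ) (hξint : Integrable ξ P) (hμ : 0 ≤ μ) (x : ℝ) :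
    (P.map ξ).withDensity (fun t ↦ ENNReal.ofReal (t / μ)) (Iic x)
      = ENNReal.ofReal (μ⁻¹ * ∫ ω in {ω | ξ ω ≤ x}, ξ ω ∂P) := by
  rw [withDensity_apply _ measurableSet_Iic,
    Measure.restrict_map_of_aemeasurable hξint.aemeasurable measurableSet_Iic,
    lintegral_map' (by fun_prop) hξint.aemeasurable.restrict,
    ← ofReal_integral_eq_lintegral_ofReal (hξint.div_const μ).restrict
      (ae_restrict_of_ae (hξ.mono fun ω hω ↦ div_nonneg hω hμ)),
    integral_div, div_eq_inv_mul]
  rfl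

theorem map_eq_withDensity_ofReal_div_of_toReal_measure_le {Ω : Type*} [MeasurableSpace Ω]
    {P : Measure Ω} [IsFiniteMeasure P] {ξ ξ₀ : Ω → ℝ} {μ : ℝ} (hξpos : ∀ᵐ ω ∂P, 0 < ξ ω)
    (hξint : Integrable ξ P) (hμ : 0 ≤ μ) (hξ₀ : Measurable ξ₀)
    (hsize : ∀ x : ℝ, 0 ≤ x →
      (P {ω | ξ₀ ω ≤ x}).toReal = μ⁻¹ * ∫ ω in {ω | ξ ω ≤ x}, ξ ω ∂P) :
    P.map ξ₀ = (P.map ξ).withDensity (fun t ↦ ENNReal.ofReal (t / μ)) := by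
  set ρ := (P.map ξ).withDensity (fun t ↦ ENNReal.ofReal (t / μ))
  have hρ_Iic_zero : ρ (Iic 0) = 0 := by
    refine withDensity_absolutelyContinuous _ _ ?_
    rw [Measure.map_apply_of_aemeasurable hξint.aemeasurable measurableSet_Iic]
    exact measure_mono_null (fun ω (h : ξ ω ≤ 0) ↦ h.not_gt) (ae_iff.mp hξpos)
  have h_Iic_of_nonneg : ∀ x, 0 ≤ x → P.map ξ₀ (Iic x) = ρ (Iic x) := fun x hx ↦ by
    rw [Measure.map_apply hξ₀ measurableSet_Iic,
      withDensity_ofReal_div_map_Iic (hξpos.mono fun _ h ↦ h.le) hξint hμ, ← hsize x hx,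
      ENNReal.ofReal_toReal (measure_ne_top _ _)]
    rfl
  refine Measure.ext_of_Iic _ _ fun x ↦ ?_
  rcases le_or_gt 0 x with hx | hx
  · exact h_Iic_of_nonneg x hx
  · have h_sub : Iic x ⊆ Iic 0 := Iic_subset_Iic.mpr hx.le
    rw [measure_mono_null h_sub ((h_Iic_of_nonneg 0 le_rfl).trans hρ_Iic_zero),
      measure_mono_null h_sub hρ_Iic_zero]

theorem measure_one_sub_mul_le_and_mul_lt_eq_lintegral {Ω : Type*} [MeasurableSpace Ω]
    {P : Measure Ω} [IsFiniteMeasure P] {ξ ξ₀ U : Ω → ℝ} {μ : ℝ} (hξpos : ∀ᵐ ω ∂P, 0 < ξ ω)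
    (hξint : Integrable ξ P) (hμ : 0 ≤ μ) (hξ₀ : Measurable ξ₀) (hUmeas : Measurable U)
    (hsize : ∀ x : ℝ, 0 ≤ x →
      (P {ω | ξ₀ ω ≤ x}).toReal = μ⁻¹ * ∫ ω in {ω | ξ ω ≤ x}, ξ ω ∂P)
    (hU : P.map U = volume.restrict (Icc (0 : ℝ) 1)) (hindep : IndepFun U ξ₀ P) (y z : ℝ) :
    P {ω | (1 - U ω) * ξ₀ ω ≤ y ∧ U ω * ξ₀ ω < z}
      = ∫⁻ ω, ENNReal.ofReal (μ⁻¹ * max (min z (ξ ω) - max (ξ ω - y) 0) 0) ∂P := by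
  set S : Set (ℝ × ℝ) := {p | (1 - p.2) * p.1 ≤ y ∧ p.2 * p.1 < z}
  have hS : MeasurableSet S :=
    (measurableSet_le (f := fun p : ℝ × ℝ ↦ (1 - p.2) * p.1) (by fun_prop)
      measurable_const).inter
      (measurableSet_lt (f := fun p : ℝ × ℝ ↦ p.2 * p.1) (by fun_prop) measurable_const)
  have h_section : Measurable fun x ↦ volume.restrict (Icc (0 : ℝ) 1) (Prod.mk x ⁻¹' S) :=
    measurable_measure_prodMk_left hS
  calc
    _ = ∫⁻ x, volume.restrict (Icc (0 : ℝ) 1) (Prod.mk x ⁻¹' S) ∂P.map ξ₀ := by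
      rw [← hU]; exact hindep.symm.measure_preimage_eq_lintegral hξ₀ hUmeas hS
    _ = ∫⁻ ω, ENNReal.ofReal (ξ ω / μ) *
          volume.restrict (Icc (0 : ℝ) 1) (Prod.mk (ξ ω) ⁻¹' S) ∂P := by
      rw [map_eq_withDensity_ofReal_div_of_toReal_measure_le hξpos hξint hμ hξ₀ hsize,
        lintegral_withDensity_eq_lintegral_mul _ (by fun_prop) h_section,
        lintegral_map' (by fun_prop) hξint.aemeasurable]
      rfl
    _ = _ := lintegral_congr_ae <| hξpos.mono fun ω hω ↦ by
      dsimp only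
      rw [show Prod.mk (ξ ω) ⁻¹' S = {u | (1 - u) * ξ ω ≤ y ∧ u * ξ ω < z} from rfl,
        volume_restrict_Icc_setOf_one_sub_mul_le_and_mul_lt hω,
        ENNReal.ofReal_div_mul_ofReal_min_one_div_sub_max_zero_one_sub_div hω hμ]

theorem stmt0_general
    {Ω : Type*} [MeasurableSpace Ω] (P : Measure Ω) [IsProbabilityMeasure P]
    (ξ ξ₀ U : Ω → ℝ) (μ : ℝ)
    (hξpos : ∀ᵐ ω ∂P, 0 < ξ ω)
    (hξint : Integrable ξ P)
    (hμpos : 0 < μ)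
    (hmeasξ₀ : Measurable ξ₀) (hmeasU : Measurable U)
    (hsize : ∀ x : ℝ, 0 ≤ x →
      (P {ω | ξ₀ ω ≤ x}).toReal = μ⁻¹ * ∫ ω in {ω | ξ ω ≤ x}, ξ ω ∂P)
    (hU : Measure.map U P = volume.restrict (Set.Icc (0:ℝ) 1))
    (hindep : IndepFun U ξ₀ P) :
    ∀ y z : ℝ, 0 ≤ y → 0 ≤ z →
      (P {ω | (1 - U ω) * ξ₀ ω ≤ y ∧ U ω * ξ₀ ω < z}).toReal
        = μ⁻¹ * ∫ ω, max (min z (ξ ω) - max (ξ ω - y) 0) 0 ∂P := by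
  intro y z _ hz
  set F : ℝ → ℝ := fun x ↦ max (min z x - max (x - y) 0) 0
  have hF_nonneg : ∀ x, 0 ≤ F x := fun _ ↦ le_max_right _ _
  have hF_int : Integrable (fun ω ↦ F (ξ ω)) P := by
    refine .of_bound (by fun_prop) z (.of_forall fun ω ↦ ?_)
    rw [Real.norm_of_nonneg (hF_nonneg _)]
    exact max_le ((sub_le_self _ (le_max_right _ _)).trans (min_le_left _ _)) hz
  have h_integrand_nonneg : ∀ ω, 0 ≤ μ⁻¹ * F (ξ ω) :=
    fun ω ↦ mul_nonneg (inv_nonneg.mpr hμpos.le) (hF_nonneg _)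
  rw [measure_one_sub_mul_le_and_mul_lt_eq_lintegral hξpos hξint hμpos.le hmeasξ₀ hmeasU hsize hU
      hindep, ← ofReal_integral_eq_lintegral_ofReal (hF_int.const_mul _)
      (.of_forall h_integrand_nonneg), ENNReal.toReal_ofReal (integral_nonneg h_integrand_nonneg),
    integral_const_mul]

theorem stmt0
    {Ω : Type*} [MeasurableSpace Ω] (P : Measure Ω) [IsProbabilityMeasure P]
    (ξ ξ₀ U : Ω → ℝ) (μ : ℝ)
    (hξpos : ∀ᵐ ω ∂P, 0 < ξ ω)
    (hξint : Integrable ξ P)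
    (hμ : μ = ∫ ω, ξ ω ∂P) (hμpos : 0 < μ)
    (hmeasξ₀ : Measurable ξ₀) (hmeasU : Measurable U)
    (hsize : ∀ x : ℝ, 0 ≤ x →
      (P {ω | ξ₀ ω ≤ x}).toReal = μ⁻¹ * ∫ ω in {ω | ξ ω ≤ x}, ξ ω ∂P)
    (hU : Measure.map U P = volume.restrict (Set.Icc (0:ℝ) 1))
    (hindep : IndepFun U ξ₀ P) :
    ∀ y z : ℝ, 0 ≤ y → 0 ≤ z →
      (P {ω | (1 - U ω) * ξ₀ ω ≤ y ∧ U ω * ξ₀ ω < z}).toReal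
        = μ⁻¹ * ∫ ω, max (min z (ξ ω) - max (ξ ω - y) 0) 0 ∂P :=
  stmt0_general P ξ ξ₀ U μ hξpos hξint hμpos hmeasξ₀ hmeasU hsize hU hindep
end

section
/- For fixed t₀ ∈ ℝ, the map T : ℝ × D(ℝ) → D(ℝ) defined by T(t₀, f) = f(t₀ + ·) is continuous with respect to the product topology on ℝ × D(ℝ), where D(ℝ) carries the Skorokhod J₁ topology, and is Borel measurable. -/
open Filter Topology

/-- Sequential characterization of convergence in the Skorokhod `J₁` topology on `D(ℝ)`:
there are strictly increasing continuous time changes `lam n` of `ℝ` (with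
`lam n (±∞) = ±∞`) such that on every compact interval both `f n ∘ lam n → g`
and `lam n → id` uniformly. -/
def J1TendstoSeq (f : ℕ → ℝ → ℝ) (g : ℝ → ℝ) : Prop :=
  ∃ lam : ℕ → ℝ → ℝ,
    (∀ n, StrictMono (lam n) ∧ Continuous (lam n) ∧
      Tendsto (lam n) atTop atTop ∧ Tendsto (lam n) atBot atBot) ∧
    ∀ a b : ℝ, a < b →
      Tendsto (fun n => ⨆ u : Set.Icc a b, |f n (lam n ↑u) - g ↑u|) atTop (𝓝 0) ∧
      Tendsto (fun n => ⨆ u : Set.Icc a b, |lam n ↑u - ↑u|) atTop (𝓝 0)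

def IsTimeChange (lam : ℝ → ℝ) : Prop :=
  StrictMono lam ∧ Continuous lam ∧ Tendsto lam atTop atTop ∧ Tendsto lam atBot atBot

lemma IsTimeChange.comp_add_sub {lam : ℝ → ℝ} (h : IsTimeChange lam) (t s : ℝ) :
    IsTimeChange fun u => lam (t + u) - s := by
  obtain ⟨hmono, hcont, htop, hbot⟩ := h
  refine ⟨fun u v huv => ?_, ?_, ?_, ?_⟩
  · exact sub_lt_sub_right (hmono (add_lt_add_right huv t)) s
  · fun_prop
  · exact tendsto_atTop_add_const_right atTop (-s)
      (htop.comp (tendsto_atTop_add_const_left atTop t tendsto_id))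
  · exact tendsto_atBot_add_const_right atBot (-s)
      (hbot.comp (tendsto_atBot_add_const_left atBot t tendsto_id))

lemma iSup_Icc_comp_const_add (g : ℝ → ℝ) (t a b : ℝ) :
    ⨆ u : Set.Icc a b, g (t + u) = ⨆ v : Set.Icc (t + a) (t + b), g v := by
  refine congrArg sSup (Set.ext fun y => ⟨?_, ?_⟩)
  · rintro ⟨⟨u, hu⟩, rfl⟩
    exact ⟨⟨t + u, by simpa using hu⟩, rfl⟩
  · rintro ⟨⟨v, hv⟩, rfl⟩
    exact ⟨⟨v - t, by simpa [le_sub_iff_add_le', sub_le_iff_le_add', add_comm] using hv⟩,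
      by simp⟩

lemma bddAbove_range_Icc_of_continuous {g : ℝ → ℝ} (hg : Continuous g) (a b : ℝ) :
    BddAbove (Set.range fun v : Set.Icc a b => g v) := by
  rw [← Set.image_eq_range]
  exact (isCompact_Icc.image hg).bddAbove

lemma iSup_Icc_abs_comp_add_sub_le {lam : ℝ → ℝ} (hlam : Continuous lam) (t s a b : ℝ) :
    ⨆ u : Set.Icc a b, |lam (t + u) - s - u| ≤
      (⨆ v : Set.Icc (t + a) (t + b), |lam v - v|) + |t - s| := by
  have hsup_nonneg : 0 ≤ ⨆ v : Set.Icc (t + a) (t + b), |lam v - v| :=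
    Real.iSup_nonneg fun _ => abs_nonneg _
  refine Real.iSup_le (fun ⟨u, hu⟩ => ?_) (by positivity)
  have hmem : t + u ∈ Set.Icc (t + a) (t + b) := by simpa using hu
  calc |lam (t + u) - s - u|
      = |(lam (t + u) - (t + u)) + (t - s)| := by ring_nf
    _ ≤ |lam (t + u) - (t + u)| + |t - s| := abs_add_le _ _
    _ ≤ _ := by
      gcongr
      exact le_ciSup (bddAbove_range_Icc_of_continuous (hlam.sub continuous_id).abs _ _)
        (⟨t + u, hmem⟩ : Set.Icc (t + a) (t + b))

/-- The time changes `lam n` of `f n` are transported to `u ↦ lam n (t + u) - tₙ n`. -/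
lemma J1TendstoSeq.comp_const_add {f : ℕ → ℝ → ℝ} {g : ℝ → ℝ} (h : J1TendstoSeq f g)
    {tₙ : ℕ → ℝ} {t : ℝ} (ht : Tendsto tₙ atTop (𝓝 t)) :
    J1TendstoSeq (fun n u => f n (tₙ n + u)) (fun u => g (t + u)) := by
  obtain ⟨lam, hlam, hconv⟩ := h
  refine ⟨fun n u => lam n (t + u) - tₙ n,
    fun n => IsTimeChange.comp_add_sub (hlam n) t (tₙ n), fun a b hab => ⟨?_, ?_⟩⟩
  · obtain ⟨hf, -⟩ := hconv (t + a) (t + b) (by linarith)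
    convert hf using 2 with n
    rw [← iSup_Icc_comp_const_add (fun v => |f n (lam n v) - g v|)]
    simp only [add_sub_cancel]
  · obtain ⟨-, hid⟩ := hconv (t + a) (t + b) (by linarith)
    have hshift : Tendsto (fun n => |t - tₙ n|) atTop (𝓝 0) := by
      simpa using (ht.const_sub t).abs
    refine squeeze_zero (fun n => Real.iSup_nonneg fun _ => abs_nonneg _)
      (fun n => iSup_Icc_abs_comp_add_sub_le (hlam n).2.1 t (tₙ n) a b) ?_
    simpa using hid.add hshift

theorem stmt6
    {D : Type*} [MetricSpace D] [MeasurableSpace D] [BorelSpace D]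
    (F : D → ℝ → ℝ)
    (hchar : ∀ (x : ℕ → D) (y : D),
      Tendsto x atTop (𝓝 y) ↔ J1TendstoSeq (fun n => F (x n)) (F y))
    (shift : ℝ × D → D)
    (hshift : ∀ (t : ℝ) (f : D) (s : ℝ), F (shift (t, f)) s = F f (t + s)) :
    Continuous shift ∧ Measurable shift := by
  have hcont : Continuous shift := by
    refine continuous_iff_seqContinuous.mpr fun x ⟨t, f⟩ hx => (hchar _ _).mpr ?_
    have hJ1 := ((hchar _ f).mp (hx.snd_nhds)).comp_const_add hx.fst_nhds
    simpa only [← hshift, Prod.mk.eta, Function.comp_def] using hJ1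
  -- `ℝ` is second countable, so the product σ-algebra on `ℝ × D` is Borel for any `D`.
  exact ⟨hcont, hcont.measurable⟩
end

section
/- Let ξ be a positive random variable with finite mean μ, S_q = ξ₁+⋯+ξ_q with (ξ_i) i.i.d. copies of ξ, and ξ̂ an independent copy of ξ. Fix y, z ≥ 0 and define p̂(u) = P{u − z < S_q ≤ u, u < S_q + ξ̂ ≤ u + y} for u ≥ 0 (equivalently intersected with any event E independent of everything, here taken trivial). Then μ⁻¹ ∫₀^∞ p̂(u) du = μ⁻¹ E[(z ∧ ξ̂ − (ξ̂ − y)₊)₊]. -/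
/-!
By Tonelli, `∫₀^∞ P{(u, ω) ∈ B} du = E[Leb{u ≥ 0 : (u, ω) ∈ B}]`. For fixed `ω` the condition
`u - z < S ≤ u < S + ξ̂ ≤ u + y` says `u ∈ [S + (ξ̂ - y)₊, S + z ∧ ξ̂)`, an interval of length
`(z ∧ ξ̂ - (ξ̂ - y)₊)₊` lying in `[0, ∞)` because `S ≥ 0`.
-/

open MeasureTheory

lemma volume_setOf_renewal_window (s x y z : ℝ) :
    volume {u : ℝ | (u - z < s ∧ s ≤ u) ∧ (u < s + x ∧ s + x ≤ u + y)}
      = ENNReal.ofReal (max (min z x - max (x - y) 0) 0) := by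
  have hwindow : {u : ℝ | (u - z < s ∧ s ≤ u) ∧ (u < s + x ∧ s + x ≤ u + y)}
      = Set.Ico (s + max 0 (x - y)) (s + min z x) := by
    ext u
    simp only [Set.mem_ofPred_eq, Set.mem_Ico, ← max_add_add_left, ← min_add_add_left,
      max_le_iff, lt_min_iff]
    constructor <;> rintro ⟨⟨_, _⟩, _, _⟩ <;> refine ⟨⟨?_, ?_⟩, ?_, ?_⟩ <;> linarith
  rw [hwindow, Real.volume_Ico, ENNReal.ofReal_max, ENNReal.ofReal_zero, max_eq_left zero_le,
    max_comm 0, add_sub_add_left_eq_sub]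

lemma integral_toReal_measure_preimage_prodMk_eq_lintegral {α β : Type*}
    [MeasurableSpace α] [MeasurableSpace β] (μ : Measure α) [SFinite μ] (ν : Measure β)
    [IsFiniteMeasure ν] {B : Set (α × β)} (hB : MeasurableSet B) :
    ∫ a, (ν (Prod.mk a ⁻¹' B)).toReal ∂μ = (∫⁻ b, μ ((·, b) ⁻¹' B) ∂ν).toReal := by
  rw [integral_toReal (measurable_measure_prodMk_left hB).aemeasurable
    (.of_forall fun _ => measure_lt_top _ _), ← Measure.prod_apply hB, Measure.prod_apply_symm hB]

lemma setIntegral_Ici_measure_renewal_window {Ω : Type*} [MeasurableSpace Ω] (P : Measure Ω)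
    [IsFiniteMeasure P] {S X : Ω → ℝ} (hS : Measurable S) (hX : Measurable X)
    (hS₀ : ∀ᵐ ω ∂P, 0 ≤ S ω) (y z : ℝ) :
    ∫ u in Set.Ici (0 : ℝ),
        (P {ω | (u - z < S ω ∧ S ω ≤ u) ∧ (u < S ω + X ω ∧ S ω + X ω ≤ u + y)}).toReal
      = ∫ ω, max (min z (X ω) - max (X ω - y) 0) 0 ∂P := by
  let B : Set (ℝ × Ω) :=
    {p | (p.1 - z < S p.2 ∧ S p.2 ≤ p.1) ∧ (p.1 < S p.2 + X p.2 ∧ S p.2 + X p.2 ≤ p.1 + y)}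
  have hB : MeasurableSet B := by measurability
  refine (integral_toReal_measure_preimage_prodMk_eq_lintegral _ _ hB).trans ?_
  rw [integral_eq_lintegral_of_nonneg_ae (f := fun ω => max (min z (X ω) - max (X ω - y) 0) 0)
    (.of_forall fun _ => le_max_right _ _) (by fun_prop)]
  congr 1
  refine lintegral_congr_ae ?_
  filter_upwards [hS₀] with ω hω
  have hsub : (·, ω) ⁻¹' B ⊆ Set.Ici 0 := fun u hu => hω.trans hu.1.2
  rw [Measure.restrict_apply' measurableSet_Ici, Set.inter_eq_left.2 hsub]
  exact volume_setOf_renewal_window (S ω) (X ω) y z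

theorem stmt11_general
    {Ω : Type*} [MeasurableSpace Ω] (P : Measure Ω) [IsProbabilityMeasure P]
    (q : ℕ) (ξs : ℕ → Ω → ℝ) (ξhat : Ω → ℝ) (μ y z : ℝ)
    (hmeas : Measurable ξhat) (hmeass : ∀ i, Measurable (ξs i))
    (hposs : ∀ i, ∀ᵐ ω ∂P, 0 < ξs i ω) :
    μ⁻¹ * ∫ u in Set.Ici (0:ℝ),
        (P {ω | (u - z < ∑ i ∈ Finset.range q, ξs i ω ∧ ∑ i ∈ Finset.range q, ξs i ω ≤ u)
            ∧ (u < (∑ i ∈ Finset.range q, ξs i ω) + ξhat ω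
                ∧ (∑ i ∈ Finset.range q, ξs i ω) + ξhat ω ≤ u + y)}).toReal
      = μ⁻¹ * ∫ ω, max (min z (ξhat ω) - max (ξhat ω - y) 0) 0 ∂P := by
  have hsum₀ : ∀ᵐ ω ∂P, 0 ≤ ∑ i ∈ Finset.range q, ξs i ω := by
    filter_upwards [ae_all_iff.2 hposs] with ω hω
    exact Finset.sum_nonneg fun i _ => (hω i).le
  rw [setIntegral_Ici_measure_renewal_window P (by fun_prop) hmeas hsum₀]

theorem stmt11
    {Ω : Type*} [MeasurableSpace Ω] (P : Measure Ω) [IsProbabilityMeasure P]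
    (q : ℕ) (ξs : ℕ → Ω → ℝ) (ξhat : Ω → ℝ) (μ y z : ℝ)
    (hy : 0 ≤ y) (hz : 0 ≤ z)
    (hmeas : Measurable ξhat) (hmeass : ∀ i, Measurable (ξs i))
    (hpos : ∀ᵐ ω ∂P, 0 < ξhat ω) (hposs : ∀ i, ∀ᵐ ω ∂P, 0 < ξs i ω)
    (hint : Integrable ξhat P) (hints : ∀ i, Integrable (ξs i) P)
    (hident : ∀ i, Measure.map (ξs i) P = Measure.map ξhat P)
    (hμ : μ = ∫ ω, ξhat ω ∂P) :
    μ⁻¹ * ∫ u in Set.Ici (0:ℝ),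
        (P {ω | (u - z < ∑ i ∈ Finset.range q, ξs i ω ∧ ∑ i ∈ Finset.range q, ξs i ω ≤ u)
            ∧ (u < (∑ i ∈ Finset.range q, ξs i ω) + ξhat ω
                ∧ (∑ i ∈ Finset.range q, ξs i ω) + ξhat ω ≤ u + y)}).toReal
      = μ⁻¹ * ∫ ω, max (min z (ξhat ω) - max (ξhat ω - y) 0) 0 ∂P :=
  stmt11_general P q ξs ξhat μ y z hmeas hmeass hposs
end
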